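/- Let n ≥ 1, S = ℚ[x_1,…,x_n], and let M_n ⊆ S^{n+1} be the spline module of the fan P_2(A_n). Then the n + 1 tuples b_0 = (1, 1, …, 1) and b_k = (0, x_1^k, x_2^k, …, x_n^k) for k = 1, …, n form an S-basis of M_n. -/

import Mathlib

open MvPolynomial

/-- The ring `S = ℚ[x_1,…,x_n]`. -/
abbrev S (n : ℕ) : Type := MvPolynomial (Fin n) ℚ

/-- The Billera–Rose spline module `M_n = C^0(P_2(A_n)) ⊆ S^{n+1}`: tuples
`(f_0, f_1, …, f_n)` with `x_i ∣ f_0 - f_i` for `1 ≤ i ≤ n` and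
`x_i - x_j ∣ f_i - f_j` for `1 ≤ i < j ≤ n`. -/
noncomputable def splineModule (n : ℕ) : Submodule (S n) (Fin (n + 1) → S n) where
  carrier := {f | (∀ i : Fin n, X i ∣ f 0 - f i.succ) ∧
    ∀ i j : Fin n, i < j → (X i - X j) ∣ f i.succ - f j.succ}
  add_mem' := by
    rintro a b ⟨ha1, ha2⟩ ⟨hb1, hb2⟩
    refine ⟨fun i => ?_, fun i j hij => ?_⟩
    · simpa [sub_add_sub_comm] using dvd_add (ha1 i) (hb1 i)
    · simpa [sub_add_sub_comm] using dvd_add (ha2 i j hij) (hb2 i j hij)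
  zero_mem' := by
    refine ⟨fun i => ?_, fun i j _ => ?_⟩ <;> simp
  smul_mem' := by
    rintro c f ⟨h1, h2⟩
    refine ⟨fun i => ?_, fun i j hij => ?_⟩
    · simpa [smul_eq_mul, mul_sub] using (h1 i).mul_left c
    · simpa [smul_eq_mul, mul_sub] using (h2 i j hij).mul_left c


/-- The tuples `b_0 = (1,1,…,1)` and `b_k = (0, x_1^k, …, x_n^k)` for `k = 1, …, n`. -/
noncomputable def powerSplines (n : ℕ) : Fin (n + 1) → (Fin (n + 1) → S n) :=
  Fin.cons (fun _ => 1) (fun k => Fin.cons 0 (fun i : Fin n => X i ^ ((k : ℕ) + 1)))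

/-!
With `t = (0, x_1, …, x_n)`, the conditions defining `M_n` say exactly that `t_j - t_i` divides
`f_j - f_i` for all `i < j`, and the tuples `b_k` are the columns `(t_i ^ k)_i` of the Vandermonde
matrix `V` of `t`. Each column satisfies these divisibilities because `a - b ∣ a ^ k - b ^ k`.
Conversely, for `f ∈ M_n` and each `i < j`, the matrix obtained from `V` by replacing one column
with `f` has rows `i` and `j` congruent modulo `t_j - t_i`, so every Cramer coordinate of
`V c = f` is divisible by each factor of `det V = ∏_{i<j} (t_j - t_i)`. These factors `x_j` and
`x_j - x_i` are pairwise non-associate irreducibles, so `det V` divides the Cramer coordinates and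
`f` is an `S`-combination of the columns, which are independent since `det V ≠ 0`.
-/

open Matrix

theorem MvPolynomial.irreducible_X_sub_X {σ R : Type*} [CommRing R] [IsDomain R] {a b : σ}
    (hab : a ≠ b) : Irreducible (X a - X b : MvPolynomial σ R) := by
  classical
  have h : sumSMulX (Finsupp.single a 1 - Finsupp.single b 1) =
      (X a - X b : MvPolynomial σ R) := by
    simp [sumSMulX]
  rw [← h]
  refine irreducible_sumSMulX _ ⟨a, by simp [hab]⟩ fun r hr => isUnit_of_dvd_one ?_
  simpa [hab] using hr a

theorem Matrix.dvd_det_of_dvd_row_sub {R n : Type*} [CommRing R] [Fintype n] [DecidableEq n]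
    (M : Matrix n n R) {p : R} {i j : n} (hij : i ≠ j) (h : ∀ c, p ∣ M i c - M j c) :
    p ∣ M.det := by
  rw [← Ideal.mem_span_singleton, ← Ideal.Quotient.eq_zero_iff_mem, RingHom.map_det]
  exact det_zero_of_row_eq hij
    (funext fun c => Ideal.Quotient.eq.mpr (Ideal.mem_span_singleton.mpr (h c)))

section CompleteGraphSplines

variable {R : Type*} [CommRing R] {m : ℕ}

def completeGraphSplines (t : Fin m → R) : Submodule R (Fin m → R) where
  carrier := {g | ∀ i j, i < j → t j - t i ∣ g j - g i}
  add_mem' hf hg i j hij := by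
    simpa [sub_add_sub_comm] using dvd_add (hf i j hij) (hg i j hij)
  zero_mem' := by simp
  smul_mem' c g hg i j hij := by simpa [mul_sub] using (hg i j hij).mul_left c

theorem mem_completeGraphSplines {t g : Fin m → R} :
    g ∈ completeGraphSplines t ↔ ∀ i j, i < j → t j - t i ∣ g j - g i := Iff.rfl

theorem dvd_det_updateCol_vandermonde {t g : Fin m → R} (hg : g ∈ completeGraphSplines t)
    (k : Fin m) {i j : Fin m} (hij : i < j) :
    t j - t i ∣ ((vandermonde t).updateCol k g).det :=
  dvd_det_of_dvd_row_sub _ hij.ne' fun c => by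
    rcases eq_or_ne c k with rfl | hck
    · simpa using hg i j hij
    · simpa [updateCol_ne hck] using sub_dvd_pow_sub_pow (t j) (t i) c

theorem det_vandermonde_dvd_cramer [DecompositionMonoid R] {t g : Fin m → R}
    (ht : ∀ i j k l, i < j → k < l → ¬(i = k ∧ j = l) →
      IsRelPrime (t j - t i) (t l - t k))
    (hg : g ∈ completeGraphSplines t) (k : Fin m) :
    (vandermonde t).det ∣ cramer (vandermonde t) g k := by
  rw [det_vandermonde, Finset.prod_sigma', cramer_apply]
  refine Finset.prod_dvd_of_isRelPrime ?_ fun p hp =>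
    dvd_det_updateCol_vandermonde hg k (Finset.mem_Ioi.mp (Finset.mem_sigma.mp hp).2)
  rintro ⟨i, j⟩ hp ⟨k, l⟩ hq hne
  exact ht i j k l (Finset.mem_Ioi.mp (Finset.mem_sigma.mp hp).2)
    (Finset.mem_Ioi.mp (Finset.mem_sigma.mp hq).2) fun ⟨hik, hjl⟩ => hne (by subst hik hjl; rfl)

theorem range_mulVecLin_vandermonde [IsDomain R] [DecompositionMonoid R] {t : Fin m → R}
    (hinj : Function.Injective t)
    (ht : ∀ i j k l, i < j → k < l → ¬(i = k ∧ j = l) →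
      IsRelPrime (t j - t i) (t l - t k)) :
    LinearMap.range (vandermonde t).mulVecLin = completeGraphSplines t := by
  refine le_antisymm ?_ fun g hg => ?_
  · rintro _ ⟨c, rfl⟩ i j _
    simp only [mulVecLin_apply, mulVec, dotProduct, vandermonde_apply, ← Finset.sum_sub_distrib,
      ← sub_mul]
    exact Finset.dvd_sum fun k _ => (sub_dvd_pow_sub_pow _ _ _).mul_right _
  · choose c hc using det_vandermonde_dvd_cramer ht hg
    refine ⟨c, smul_right_injective _ (det_vandermonde_ne_zero_iff.mpr hinj) ?_⟩
    dsimp only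
    rw [mulVecLin_apply, ← mulVec_smul, ← mulVec_cramer _ g]
    exact congrArg _ (funext fun k => (hc k).symm)

theorem exists_basis_completeGraphSplines [IsDomain R] [DecompositionMonoid R] {t : Fin m → R}
    (hinj : Function.Injective t)
    (ht : ∀ i j k l, i < j → k < l → ¬(i = k ∧ j = l) →
      IsRelPrime (t j - t i) (t l - t k)) :
    ∃ b : Module.Basis (Fin m) R (completeGraphSplines t),
      ∀ k, (b k : Fin m → R) = fun i => t i ^ (k : ℕ) := by
  have hV : Function.Injective (vandermonde t).mulVecLin := by
    rw [coe_mulVecLin]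
    exact mulVec_injective_of_det_ne_zero (det_vandermonde_ne_zero_iff.mpr hinj)
  let e := (LinearEquiv.ofInjective _ hV).trans
    (LinearEquiv.ofEq _ _ (range_mulVecLin_vandermonde hinj ht))
  refine ⟨(Pi.basisFun R (Fin m)).map e, fun k => ?_⟩
  funext i
  simp [e]

end CompleteGraphSplines

section BraidArrangement

variable {n : ℕ}

noncomputable def coordsWithZero (n : ℕ) : Fin (n + 1) → S n := Fin.cons 0 X

@[simp] theorem coordsWithZero_zero : coordsWithZero n 0 = 0 := rfl

@[simp] theorem coordsWithZero_succ (i : Fin n) : coordsWithZero n i.succ = X i := rfl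

theorem coordsWithZero_injective : Function.Injective (coordsWithZero n) :=
  Fin.cons_injective_iff.mpr ⟨fun ⟨i, hi⟩ => X_ne_zero i hi, X_injective⟩

theorem splineModule_eq_completeGraphSplines :
    splineModule n = completeGraphSplines (coordsWithZero n) := by
  ext g
  simp only [mem_completeGraphSplines, Fin.forall_fin_succ, Fin.succ_lt_succ_iff, Fin.succ_pos,
    not_lt_zero, false_imp_iff, true_imp_iff, true_and, coordsWithZero_zero, coordsWithZero_succ,
    sub_zero]
  refine ⟨fun ⟨h0, h1⟩ => ⟨fun i => dvd_sub_comm.mp (h0 i), fun i j hij => ?_⟩,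
    fun ⟨h0, h1⟩ => ⟨fun i => dvd_sub_comm.mp (h0 i), fun i j hij => ?_⟩⟩ <;>
  · rw [← neg_sub, neg_dvd]
    exact dvd_sub_comm.mp (h1 i j hij)

theorem powerSplines_eq (k : Fin (n + 1)) :
    powerSplines n k = fun i => coordsWithZero n i ^ (k : ℕ) := by
  funext i
  cases k using Fin.cases <;> cases i using Fin.cases <;> simp [powerSplines]

theorem irreducible_coordsWithZero_sub {i j : Fin (n + 1)} (hij : i < j) :
    Irreducible (coordsWithZero n j - coordsWithZero n i) := by
  cases j using Fin.cases with
  | zero => exact absurd hij (Fin.not_lt_zero i)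
  | succ b =>
    cases i using Fin.cases with
    | zero => simpa using X_prime.irreducible
    | succ a => exact irreducible_X_sub_X (Fin.succ_lt_succ_iff.mp hij).ne'

theorem exists_eval_coordsWithZero (w : Fin (n + 1) → ℚ) (hw : w 0 = 0) :
    ∃ v : Fin n → ℚ, ∀ m, eval v (coordsWithZero n m) = w m :=
  ⟨Fin.tail w, Fin.cases (by simp [hw]) (by simp [Fin.tail])⟩

theorem coordsWithZero_sub_not_dvd {i j k l : Fin (n + 1)} (hij : i < j) (hkl : k < l)
    (hne : ¬(i = k ∧ j = l)) :
    ¬ coordsWithZero n j - coordsWithZero n i ∣ coordsWithZero n l - coordsWithZero n k := by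
  classical
  -- at `t = (0, 1, …, n)` with `t_j` moved to `i`, the only vanishing `t_l - t_k` (`k < l`)
  -- is `t_j - t_i`
  let w : Fin (n + 1) → ℕ := fun m => if m = j then i else m
  obtain ⟨v, hv⟩ := exists_eval_coordsWithZero (fun m => (w m : ℚ))
    (by simp [w, ((Fin.zero_le i).trans_lt hij).ne])
  intro hdvd
  have hji : eval v (coordsWithZero n j - coordsWithZero n i) = 0 := by simp [hv, w]
  have hlk := map_dvd (eval v) hdvd
  rw [hji, zero_dvd_iff, map_sub, hv, hv, sub_eq_zero, Nat.cast_inj] at hlk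
  simp only [w] at hlk
  split_ifs at hlk <;> simp only [Fin.ext_iff, Fin.lt_def] at * <;> omega

theorem isRelPrime_coordsWithZero_sub {i j k l : Fin (n + 1)} (hij : i < j) (hkl : k < l)
    (hne : ¬(i = k ∧ j = l)) :
    IsRelPrime (coordsWithZero n j - coordsWithZero n i)
      (coordsWithZero n l - coordsWithZero n k) :=
  (irreducible_coordsWithZero_sub hij).isRelPrime_iff_not_dvd.mpr
    (coordsWithZero_sub_not_dvd hij hkl hne)

end BraidArrangement

theorem power_splines_basis (n : ℕ) :
    ∃ b : Module.Basis (Fin (n + 1)) (S n) (splineModule n),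
      ∀ k : Fin (n + 1), (b k : Fin (n + 1) → S n) = powerSplines n k := by
  rw [splineModule_eq_completeGraphSplines]
  simpa only [powerSplines_eq] using
    exists_basis_completeGraphSplines (coordsWithZero_injective (n := n))
      fun _ _ _ _ => isRelPrime_coordsWithZero_sub
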